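/- arXiv:2406.08538 — 2 statements merged into one kernel-verified Lean document; each statement's English description precedes it below -/
import Mathlib

section
/- If every 3-point vertex in a tree satisfies the condition that the largest of its three incident edge-labels is at most the sum of the other two, and every 4-point vertex satisfies that the largest of its four incident edge-labels is at most the sum of the other three plus one, then for any tree subgraph with boundary edge-labels m_1, ..., m_n (all natural numbers), the label m_n is at most m_1 + m_2 + ... + m_{n-1} + (number of 4-point vertices in the subgraph). -/
/-!
At an internal vertex the incident labels satisfy a polygon inequality: each is at most the sum of
the others plus a slack, `0` at a vertex of degree three and `1` at one of degree four. Two label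
families sharing exactly one edge `f` glue to a family on the remaining edges with the slacks added:
bound a label through its own family, then bound the summand at `f` through the other one. A subtree
is built from one vertex by repeatedly attaching a leaf along a single edge, so its boundary labels
satisfy the polygon inequality with slack the number of its degree-four vertices.
-/

open Finset

section Polygon

variable {α M : Type*} [DecidableEq α] [AddCommMonoid M] [PartialOrder M] [IsOrderedAddMonoid M]

def PolygonIneq (x : α → M) (s : Finset α) (a : M) : Prop :=
  ∀ e ∈ s, x e ≤ ∑ f ∈ s.erase e, x f + a

theorem PolygonIneq.glue {x : α → M} {s t : Finset α} {a b : M} {f : α}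
    (hs : PolygonIneq x s a) (ht : PolygonIneq x t b) (hst : s ∩ t = {f}) :
    PolygonIneq x ((s ∪ t).erase f) (a + b) := by
  intro e he
  obtain ⟨hef, hest⟩ := mem_erase.1 he
  wlog hes : e ∈ s generalizing s t a b
  · have het : e ∈ t := (mem_union.1 hest).resolve_left hes
    simpa only [union_comm, add_comm] using
      this ht hs (by rw [inter_comm, hst]) (by rwa [union_comm]) (by rwa [union_comm]) het
  have hfst : f ∈ s ∩ t := hst ▸ mem_singleton_self f
  have het : e ∉ t := fun het => hef (mem_singleton.1 (hst ▸ mem_inter.2 ⟨hes, het⟩))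
  have hsplit : ((s ∪ t).erase f).erase e = (s.erase e).erase f ∪ t.erase f := by
    ext g; simp only [mem_erase, mem_union]; grind
  have hdisj : Disjoint ((s.erase e).erase f) (t.erase f) := by
    rw [disjoint_left]
    intro g hgs hgt
    exact (mem_erase.1 hgt).1 (mem_singleton.1 (hst ▸ mem_inter.2
      ⟨mem_of_mem_erase (mem_of_mem_erase hgs), mem_of_mem_erase hgt⟩))
  calc x e ≤ ∑ g ∈ s.erase e, x g + a := hs e hes
    _ = x f + ∑ g ∈ (s.erase e).erase f, x g + a := by
      rw [add_sum_erase _ _ (mem_erase.2 ⟨Ne.symm hef, (mem_inter.1 hfst).1⟩)]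
    _ ≤ (∑ g ∈ t.erase f, x g + b) + ∑ g ∈ (s.erase e).erase f, x g + a := by
      gcongr; exact ht f (mem_inter.1 hfst).2
    _ = ∑ g ∈ ((s ∪ t).erase f).erase e, x g + (a + b) := by
      rw [hsplit, sum_union hdisj]; abel

end Polygon

namespace SimpleGraph

variable {V : Type*} {G : SimpleGraph V} {S : Finset V} {v w : V}

theorem IsAcyclic.exists_leaf_of_connected_induce (hG : G.IsAcyclic)
    (hconn : (G.induce (S : Set V)).Connected) (hS : S.Nontrivial) :
    ∃ v ∈ S, ∃ w ∈ S, G.Adj v w ∧ ∀ x ∈ S, G.Adj v x → x = w := by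
  have hT : (G.induce (S : Set V)).IsTree := ⟨hconn, hG.induce _⟩
  have : Nontrivial (S : Set V) := hS.coe_sort
  classical
  obtain ⟨v, hv⟩ := hT.exists_vert_degree_one_of_nontrivial
  obtain ⟨w, hvw, huniq⟩ := degree_eq_one_iff_existsUnique_adj.1 hv
  exact ⟨v, v.2, w, w.2, hvw, fun x hx hvx => congrArg Subtype.val (huniq ⟨x, hx⟩ hvx)⟩

theorem connected_induce_erase_of_leaf [DecidableEq V] (hconn : (G.induce (S : Set V)).Connected)
    (hvS : v ∈ S) (hwS : w ∈ S) (hwv : w ≠ v) (hleaf : ∀ x ∈ S, G.Adj v x → x = w) :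
    (G.induce (S.erase v : Set V)).Connected := by
  have hsub : ((G.induce (S : Set V)).neighborSet ⟨v, hvS⟩).Subsingleton := by
    rintro ⟨x, hx⟩ hvx ⟨y, hy⟩ hvy
    exact Subtype.ext ((hleaf x hx hvx).trans (hleaf y hy hvy).symm)
  refine (connected_iff _).2 ⟨fun ⟨u₁, hu₁⟩ ⟨u₂, hu₂⟩ => ?_, ⟨⟨w, by simp [hwv, hwS]⟩⟩⟩
  obtain ⟨hu₁v, hu₁S⟩ := mem_erase.1 hu₁
  obtain ⟨hu₂v, hu₂S⟩ := mem_erase.1 hu₂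
  obtain ⟨p, hp⟩ := (hconn.preconnected ⟨u₁, hu₁S⟩ ⟨u₂, hu₂S⟩).exists_isPath
  have hv : ⟨v, hvS⟩ ∉ p.support :=
    hp.isTrail.not_mem_support_of_subsingleton_neighborSet (by simpa using Ne.symm hu₁v)
      (by simpa using Ne.symm hu₂v) hsub
  refine ⟨(p.map (Embedding.induce _).toHom).induce _ fun x hx => ?_⟩
  obtain ⟨y, hy, rfl⟩ := List.mem_map.1 (Walk.support_map _ p ▸ hx)
  exact mem_erase.2 ⟨fun hyv => hv ((show y = ⟨v, hvS⟩ from Subtype.ext hyv) ▸ hy), y.2⟩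

variable [DecidableEq V] [Fintype V] [DecidableRel G.Adj]

def boundary (G : SimpleGraph V) [DecidableRel G.Adj] (S : Finset V) : Finset (Sym2 V) :=
  G.edgeFinset.filter (fun e => ∃ a b, e = s(a, b) ∧ a ∈ S ∧ b ∉ S)

theorem mem_boundary {e : Sym2 V} :
    e ∈ G.boundary S ↔ ∃ a b, G.Adj a b ∧ a ∈ S ∧ b ∉ S ∧ e = s(a, b) := by
  simp only [boundary, mem_filter, mem_edgeFinset]
  constructor
  · rintro ⟨hE, a, b, rfl, ha, hb⟩
    exact ⟨a, b, hE, ha, hb, rfl⟩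
  · rintro ⟨a, b, hab, ha, hb, rfl⟩
    exact ⟨hab, a, b, rfl, ha, hb⟩

theorem mem_incidenceFinset_iff {e : Sym2 V} :
    e ∈ G.incidenceFinset v ↔ ∃ x, G.Adj v x ∧ e = s(v, x) := by
  induction e using Sym2.ind with
  | h a b =>
    rw [mem_incidenceFinset, mk'_mem_incidenceSet_iff]
    constructor
    · rintro ⟨hab, rfl | rfl⟩
      · exact ⟨b, hab, rfl⟩
      · exact ⟨a, hab.symm, Sym2.eq_swap⟩
    · rintro ⟨x, hvx, he⟩
      rcases Sym2.eq_iff.1 he with ⟨rfl, rfl⟩ | ⟨rfl, rfl⟩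
      · exact ⟨hvx, .inl rfl⟩
      · exact ⟨hvx.symm, .inr rfl⟩

theorem boundary_singleton : G.boundary {v} = G.incidenceFinset v := by
  ext e
  rw [mem_boundary, mem_incidenceFinset_iff]
  constructor
  · rintro ⟨a, b, hab, ha, -, rfl⟩
    rw [mem_singleton.1 ha]
    exact ⟨b, mem_singleton.1 ha ▸ hab, rfl⟩
  · rintro ⟨x, hvx, rfl⟩
    exact ⟨v, x, hvx, mem_singleton_self v, fun hx => hvx.ne (mem_singleton.1 hx).symm, rfl⟩

theorem incidenceFinset_inter_boundary_erase_of_leaf (hwS : w ∈ S) (hvw : G.Adj v w)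
    (hleaf : ∀ x ∈ S, G.Adj v x → x = w) :
    G.incidenceFinset v ∩ G.boundary (S.erase v) = {s(v, w)} := by
  ext e
  rw [mem_inter, mem_incidenceFinset_iff, mem_boundary, mem_singleton]
  constructor
  · rintro ⟨⟨x, hvx, rfl⟩, a, b, -, ha, -, he⟩
    rcases Sym2.eq_iff.1 he with ⟨rfl, -⟩ | ⟨rfl, rfl⟩
    · exact absurd rfl (mem_erase.1 ha).1
    · rw [hleaf x (mem_of_mem_erase ha) hvx]
  · rintro rfl
    exact ⟨⟨w, hvw, rfl⟩, w, v, hvw.symm, mem_erase.2 ⟨hvw.ne.symm, hwS⟩, by simp, Sym2.eq_swap⟩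

theorem boundary_eq_erase_union_of_leaf (hvS : v ∈ S) (hwS : w ∈ S) (hvw : G.Adj v w)
    (hleaf : ∀ x ∈ S, G.Adj v x → x = w) :
    G.boundary S = (G.incidenceFinset v ∪ G.boundary (S.erase v)).erase s(v, w) := by
  ext e
  rw [mem_erase, mem_union, mem_incidenceFinset_iff, mem_boundary, mem_boundary]
  constructor
  · rintro ⟨a, b, hab, ha, hb, rfl⟩
    refine ⟨fun he => ?_, ?_⟩
    · rcases Sym2.eq_iff.1 he with ⟨-, rfl⟩ | ⟨-, rfl⟩
      · exact hb hwS
      · exact hb hvS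
    by_cases hav : a = v
    · exact .inl ⟨b, hav ▸ hab, hav ▸ rfl⟩
    · exact .inr ⟨a, b, hab, mem_erase.2 ⟨hav, ha⟩, fun hb' => hb (mem_of_mem_erase hb'), rfl⟩
  · rintro ⟨hne, ⟨x, hvx, rfl⟩ | ⟨a, b, hab, ha, hb, rfl⟩⟩
    · have hxw : x ≠ w := by rintro rfl; exact hne rfl
      exact ⟨v, x, hvx, hvS, fun hx => hxw (hleaf x hx hvx), rfl⟩
    · have hbv : b ≠ v := by
        rintro rfl
        rw [hleaf a (mem_of_mem_erase ha) hab.symm] at hne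
        exact hne Sym2.eq_swap
      exact ⟨a, b, hab, mem_of_mem_erase ha, fun hbS => hb (mem_erase.2 ⟨hbv, hbS⟩), rfl⟩

theorem IsAcyclic.polygonIneq_boundary {M : Type*} [AddCommMonoid M] [PartialOrder M]
    [IsOrderedAddMonoid M] (hG : G.IsAcyclic) (x : Sym2 V → M) (c : V → M)
    (hconn : (G.induce (S : Set V)).Connected)
    (hloc : ∀ v ∈ S, PolygonIneq x (G.incidenceFinset v) (c v)) :
    PolygonIneq x (G.boundary S) (∑ v ∈ S, c v) := by
  induction S using Finset.strongInduction with
  | H S ih =>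
  have hne : S.Nonempty := Set.nonempty_coe_sort.1 hconn.nonempty
  obtain ⟨v, rfl⟩ | hS := hne.exists_eq_singleton_or_nontrivial
  · rw [boundary_singleton, sum_singleton]
    exact hloc v (mem_singleton_self v)
  obtain ⟨v, hvS, w, hwS, hvw, hleaf⟩ := hG.exists_leaf_of_connected_induce hconn hS
  have hS' := ih (S.erase v) (erase_ssubset hvS)
    (connected_induce_erase_of_leaf hconn hvS hwS hvw.ne.symm hleaf)
    (fun u hu => hloc u (mem_of_mem_erase hu))
  rw [boundary_eq_erase_union_of_leaf hvS hwS hvw hleaf, ← add_sum_erase S c hvS]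
  exact (hloc v hvS).glue hS' (incidenceFinset_inter_boundary_erase_of_leaf hwS hvw hleaf)

end SimpleGraph

theorem stmt0_general {V : Type*} [Fintype V] [DecidableEq V]
    (G : SimpleGraph V) [DecidableRel G.Adj] (hT : G.IsTree)
    (label : Sym2 V → ℕ)
    (hdeg : ∀ v, G.degree v = 1 ∨ G.degree v = 3 ∨ G.degree v = 4)
    (h3 : ∀ v, G.degree v = 3 → ∀ e ∈ G.incidenceFinset v,
      label e ≤ ∑ e' ∈ (G.incidenceFinset v).erase e, label e')
    (h4 : ∀ v, G.degree v = 4 → ∀ e ∈ G.incidenceFinset v,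
      label e ≤ (∑ e' ∈ (G.incidenceFinset v).erase e, label e') + 1)
    (S : Finset V)
    (hconn : (G.induce (↑S : Set V)).Connected)
    (hInt : ∀ v ∈ S, G.degree v ≠ 1)
    (B : Finset (Sym2 V))
    (hB : B = G.edgeFinset.filter (fun e => ∃ a b, e = s(a, b) ∧ a ∈ S ∧ b ∉ S))
    (e : Sym2 V) (he : e ∈ B) :
    label e ≤ (∑ e' ∈ B.erase e, label e') +
      (S.filter (fun v => G.degree v = 4)).card := by
  subst hB
  have hloc : ∀ v ∈ S,
      PolygonIneq label (G.incidenceFinset v) (if G.degree v = 4 then 1 else 0) := by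
    intro v hv
    rcases hdeg v with h | h | h
    · exact absurd h (hInt v hv)
    · simpa [PolygonIneq, h] using h3 v h
    · simpa [PolygonIneq, h] using h4 v h
  rw [card_filter]
  exact hT.isAcyclic.polygonIneq_boundary label _ hconn hloc e he

/-- In a finite tree with edge labels, where every internal
vertex has degree 3 or 4, degree-3 vertices satisfy that each incident
label is at most the sum of the other two incident labels, and degree-4
vertices satisfy that each incident label is at most the sum of the other
three plus one, every boundary edge label of a connected subtree `S` of
internal vertices is bounded by the sum of the other boundary labels plus
the number of degree-4 vertices in `S`. -/
theorem stmt0 {V : Type*} [Fintype V] [DecidableEq V]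
    (G : SimpleGraph V) [DecidableRel G.Adj] (hT : G.IsTree)
    (label : Sym2 V → ℕ)
    (hdeg : ∀ v, G.degree v = 1 ∨ G.degree v = 3 ∨ G.degree v = 4)
    (h3 : ∀ v, G.degree v = 3 → ∀ e ∈ G.incidenceFinset v,
      label e ≤ ∑ e' ∈ (G.incidenceFinset v).erase e, label e')
    (h4 : ∀ v, G.degree v = 4 → ∀ e ∈ G.incidenceFinset v,
      label e ≤ (∑ e' ∈ (G.incidenceFinset v).erase e, label e') + 1)
    (S : Finset V) (hS : S.Nonempty)
    (hconn : (G.induce (↑S : Set V)).Connected)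
    (hInt : ∀ v ∈ S, G.degree v ≠ 1)
    (B : Finset (Sym2 V))
    (hB : B = G.edgeFinset.filter (fun e => ∃ a b, e = s(a, b) ∧ a ∈ S ∧ b ∉ S))
    (e : Sym2 V) (he : e ∈ B) :
    label e ≤ (∑ e' ∈ B.erase e, label e') +
      (S.filter (fun v => G.degree v = 4)).card :=
  stmt0_general G hT label hdeg h3 h4 S hconn hInt B hB e he
end

section
/- Combining the two previous facts: in a planar tree with n cyclically ordered leaves, all internal vertices of degree 3 or 4, and natural-number edge labels satisfying the vertex conditions (degree-3: max label ≤ sum of other two; degree-4: max label ≤ sum of other three plus 1), every internal edge whose cut separates d consecutive leaves from the rest, with all leaf edges labeled 0, carries a label at most ⌊(d-1)/2⌋. -/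
/-!
Orient every edge `(u, v)` of the tree and count the leaves on the `u`-side of it. By induction
over the `u`-side one shows `2 * label s(u, v) + 1 ≤ #leaves`. If `u` is a leaf, the label is `0`
and there is one leaf. Otherwise the `u`-side is the disjoint union of the sides behind the other
`deg u - 1` edges at `u`, so it has at least `2 S + deg u - 1` leaves, where `S` is the sum of
their labels. The vertex conditions at degree 3 and 4 both amount to
`2 * label s(u, v) + 2 ≤ 2 S + deg u`.
-/

open scoped Classical

namespace SimpleGraph

open Finset

variable {V : Type*} {G : SimpleGraph V} {u v w x : V}

def side (G : SimpleGraph V) (u v : V) : Set V :=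
  {x | (G.deleteEdges {s(u, v)}).Reachable u x}

lemma mem_side_self : u ∈ G.side u v :=
  Reachable.refl u

lemma reachable_deleteEdges_of_notMem_support (p : G.Walk w x) (hu : u ∉ p.support) (c : V) :
    (G.deleteEdges {s(u, c)}).Reachable w x :=
  reachable_deleteEdges_iff_exists_walk.2 ⟨p, fun h => hu (p.fst_mem_support_of_mem_edges h)⟩

lemma IsAcyclic.not_reachable_deleteEdges (hG : G.IsAcyclic) (huv : G.Adj u v) :
    ¬ (G.deleteEdges {s(u, v)}).Reachable u v :=
  isBridge_iff.1 (isAcyclic_iff_forall_adj_isBridge.1 hG huv)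

lemma IsAcyclic.disjoint_side_side (hG : G.IsAcyclic) (huv : G.Adj u v) :
    Disjoint (G.side u v) (G.side v u) := by
  refine Set.disjoint_left.2 fun x hu hv => hG.not_reachable_deleteEdges huv (hu.trans ?_)
  change (G.deleteEdges {s(v, u)}).Reachable v x at hv
  rw [Sym2.eq_swap] at hv
  exact hv.symm

lemma IsAcyclic.exists_walk_notMem_support (hG : G.IsAcyclic) (huw : G.Adj u w)
    (hx : x ∈ G.side w u) : ∃ p : G.Walk w x, u ∉ p.support := by
  obtain ⟨p, hp⟩ := reachable_deleteEdges_iff_exists_walk.1 hx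
  refine ⟨p, fun hu => hG.not_reachable_deleteEdges huw.symm ?_⟩
  exact reachable_deleteEdges_iff_exists_walk.2
    ⟨p.takeUntil u hu, fun h => hp (p.edges_takeUntil_subset_edges hu h)⟩

lemma IsAcyclic.side_subset_side (hG : G.IsAcyclic) (huw : G.Adj u w) (hwv : w ≠ v) :
    G.side w u ⊆ G.side u v := by
  intro x hx
  obtain ⟨p, hu⟩ := hG.exists_walk_notMem_support huw hx
  have hadj : (G.deleteEdges {s(u, v)}).Adj u w := by
    rw [deleteEdges_adj, Set.mem_singleton_iff, Sym2.congr_right]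
    exact ⟨huw, hwv⟩
  exact hadj.reachable.trans (reachable_deleteEdges_of_notMem_support p hu v)

lemma IsAcyclic.side_ssubset_side (hG : G.IsAcyclic) (huw : G.Adj u w) (hwv : w ≠ v) :
    G.side w u ⊂ G.side u v := by
  refine (Set.ssubset_iff_of_subset (hG.side_subset_side huw hwv)).2 ⟨u, mem_side_self, ?_⟩
  exact fun hu => Set.disjoint_left.1 (hG.disjoint_side_side huw) mem_side_self hu

lemma exists_mem_side_of_mem_side (hx : x ∈ G.side u v)
    (hxu : x ≠ u) : ∃ w, G.Adj u w ∧ w ≠ v ∧ x ∈ G.side w u := by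
  obtain ⟨p, hp⟩ := reachable_deleteEdges_iff_exists_walk.1 hx
  have hq : s(u, v) ∉ p.bypass.edges := fun h => hp (p.edges_bypass_subset_edges h)
  cases hb : p.bypass with
  | nil => exact absurd rfl hxu
  | @cons _ w _ huw q =>
    have hpath := hb ▸ p.bypass_isPath
    rw [Walk.cons_isPath_iff] at hpath
    rw [hb, Walk.edges_cons, List.mem_cons, not_or, Sym2.congr_right] at hq
    refine ⟨w, huw, fun h => hq.1 h.symm, ?_⟩
    change (G.deleteEdges {s(w, u)}).Reachable w x
    rw [Sym2.eq_swap]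
    exact reachable_deleteEdges_of_notMem_support q hpath.2 w

lemma IsAcyclic.disjoint_side_of_adj (hG : G.IsAcyclic) {w' : V} (huw : G.Adj u w)
    (huw' : G.Adj u w') (hne : w ≠ w') : Disjoint (G.side w u) (G.side w' u) :=
  (hG.disjoint_side_side huw.symm).mono_right (hG.side_subset_side huw' hne.symm)

lemma incidenceFinset_eq_image [Fintype V] [DecidableEq V] [DecidableRel G.Adj] (u : V) :
    G.incidenceFinset u = (G.neighborFinset u).image (s(u, ·)) := by
  ext e
  induction e with
  | h a b =>
    simp only [mem_incidenceFinset, mk'_mem_incidenceSet_iff, mem_image, mem_neighborFinset]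
    constructor
    · rintro ⟨hab, rfl | rfl⟩
      · exact ⟨b, hab, rfl⟩
      · exact ⟨a, hab.symm, Sym2.eq_swap⟩
    · rintro ⟨w, huw, hw⟩
      rcases Sym2.eq_iff.1 hw with ⟨rfl, rfl⟩ | ⟨rfl, rfl⟩
      · exact ⟨huw, Or.inl rfl⟩
      · exact ⟨huw.symm, Or.inr rfl⟩

lemma sum_incidenceFinset_erase [Fintype V] [DecidableEq V] [DecidableRel G.Adj]
    {M : Type*} [AddCommMonoid M] (f : Sym2 V → M) (u v : V) :
    ∑ e ∈ (G.incidenceFinset u).erase s(u, v), f e =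
      ∑ w ∈ (G.neighborFinset u).erase v, f s(u, w) := by
  have hinj : Function.Injective (s(u, ·) : V → Sym2 V) := fun _ _ h => Sym2.congr_right.1 h
  rw [incidenceFinset_eq_image, ← image_erase hinj, sum_image hinj.injOn]

section Leaves

variable {ι : Type*} [Fintype ι]

noncomputable def sideLeaves (G : SimpleGraph V) (leaf : ι → V) (u v : V) : Finset ι :=
  {k | leaf k ∈ G.side u v}

lemma IsAcyclic.card_sideLeaves [Fintype V] [DecidableEq V] [DecidableRel G.Adj]
    (hG : G.IsAcyclic) (leaf : ι → V) (hu : ∀ k, leaf k ≠ u) :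
    #(G.sideLeaves leaf u v) =
      ∑ w ∈ (G.neighborFinset u).erase v, #(G.sideLeaves leaf w u) := by
  have hunion : G.sideLeaves leaf u v =
      ((G.neighborFinset u).erase v).biUnion (G.sideLeaves leaf · u) := by
    ext k
    simp only [sideLeaves, mem_filter, mem_univ, true_and, mem_biUnion, mem_erase,
      mem_neighborFinset]
    constructor
    · intro hk
      obtain ⟨w, huw, hwv, hkw⟩ := exists_mem_side_of_mem_side hk (hu k)
      exact ⟨w, ⟨hwv, huw⟩, hkw⟩
    · rintro ⟨w, ⟨hwv, huw⟩, hkw⟩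
      exact hG.side_subset_side huw hwv hkw
  rw [hunion, card_biUnion]
  intro w hw w' hw' hne
  simp only [coe_erase, Set.mem_sdiff, mem_coe, mem_neighborFinset] at hw hw'
  simp only [sideLeaves, disjoint_filter]
  exact fun k _ hk => Set.disjoint_left.1 (hG.disjoint_side_of_adj hw.1 hw'.1 hne) hk

theorem IsAcyclic.two_mul_label_add_one_le_card_sideLeaves [Fintype V] [DecidableEq V]
    [DecidableRel G.Adj] (hG : G.IsAcyclic) (label : Sym2 V → ℕ) (leaf : ι → V)
    (hleaf : ∀ v, G.degree v = 1 ↔ ∃ k, leaf k = v)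
    (hleaf0 : ∀ e ∈ G.edgeFinset, (∃ k, leaf k ∈ e) → label e = 0)
    (hvert : ∀ u, G.degree u ≠ 1 → ∀ e ∈ G.incidenceFinset u,
      2 * label e + 2 ≤ 2 * ∑ e' ∈ (G.incidenceFinset u).erase e, label e' + G.degree u)
    (huv : G.Adj u v) : 2 * label s(u, v) + 1 ≤ #(G.sideLeaves leaf u v) := by
  induction hN : (G.side u v).ncard using Nat.strong_induction_on generalizing u v with
  | _ N ih =>
  by_cases hu : G.degree u = 1
  · obtain ⟨k, rfl⟩ := (hleaf u).1 hu
    have hk : k ∈ G.sideLeaves leaf (leaf k) v := by simp [sideLeaves, mem_side_self]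
    have h0 : label s(leaf k, v) = 0 :=
      hleaf0 _ (G.mem_edgeFinset.2 huv) ⟨k, Sym2.mem_mk_left _ _⟩
    have := card_pos.2 ⟨k, hk⟩
    omega
  have hchild : ∀ w ∈ (G.neighborFinset u).erase v,
      2 * label s(u, w) + 1 ≤ #(G.sideLeaves leaf w u) := by
    intro w hw
    rw [mem_erase, mem_neighborFinset] at hw
    rw [Sym2.eq_swap]
    exact ih _ (hN ▸ Set.ncard_lt_ncard (hG.side_ssubset_side hw.2 hw.1)) hw.2.symm rfl
  have hcount := sum_le_sum hchild
  rw [← hG.card_sideLeaves leaf fun k hk => hu ((hleaf u).2 ⟨k, hk⟩), sum_add_distrib,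
    ← mul_sum, sum_const, smul_eq_mul, mul_one,
    card_erase_of_mem (G.mem_neighborFinset u v |>.2 huv), card_neighborFinset_eq_degree]
    at hcount
  have hvertex := hvert u hu s(u, v) (by simp [huv])
  rw [sum_incidenceFinset_erase] at hvertex
  have := G.degree_pos_iff_exists_adj u |>.2 ⟨v, huv⟩
  omega

end Leaves

end SimpleGraph

open Finset in
lemma Fin.card_filter_le_and_lt {n i j : ℕ} (hj : j ≤ n) :
    #{k : Fin n | i ≤ (k : ℕ) ∧ (k : ℕ) < j} = j - i := by
  rw [← Nat.card_Ico i j, ← card_map Fin.valEmbedding]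
  congr 1
  ext m
  simp only [mem_map, mem_filter, mem_univ, true_and, Fin.valEmbedding_apply, mem_Ico]
  exact ⟨by rintro ⟨k, hk, rfl⟩; exact hk, fun hm => ⟨⟨m, by omega⟩, hm, rfl⟩⟩

theorem stmt4_general {V : Type*} [Fintype V] [DecidableEq V]
    (G : SimpleGraph V) [DecidableRel G.Adj] (hT : G.IsTree)
    (label : Sym2 V → ℕ)
    (n : ℕ)
    (leaf : Fin n → V)
    (hleaf : ∀ v, G.degree v = 1 ↔ ∃ k, leaf k = v)
    (hdeg : ∀ v, G.degree v = 1 ∨ G.degree v = 3 ∨ G.degree v = 4)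
    (h3 : ∀ v, G.degree v = 3 → ∀ e ∈ G.incidenceFinset v,
      label e ≤ ∑ e' ∈ (G.incidenceFinset v).erase e, label e')
    (h4 : ∀ v, G.degree v = 4 → ∀ e ∈ G.incidenceFinset v,
      label e ≤ (∑ e' ∈ (G.incidenceFinset v).erase e, label e') + 1)
    (hleaf0 : ∀ e ∈ G.edgeFinset, (∃ k, leaf k ∈ e) → label e = 0)
    (u v : V) (huv : G.Adj u v)
    (A : Set V) (hA : A = {w | (G.deleteEdges {s(u, v)}).Reachable u w})
    (i j : ℕ) (hj : j ≤ n)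
    (harc : ∀ k : Fin n, leaf k ∈ A ↔ i ≤ (k : ℕ) ∧ (k : ℕ) < j) :
    label s(u, v) ≤ (j - i - 1) / 2 := by
  have hvert : ∀ u, G.degree u ≠ 1 → ∀ e ∈ G.incidenceFinset u,
      2 * label e + 2 ≤ 2 * ∑ e' ∈ (G.incidenceFinset u).erase e, label e' + G.degree u := by
    intro u hu e he
    rcases hdeg u with h | h | h
    · exact absurd h hu
    · have := h3 u h e he
      omega
    · have := h4 u h e he
      omega
  have hleaves :
      G.sideLeaves leaf u v = ({k | i ≤ (k : ℕ) ∧ (k : ℕ) < j} : Finset (Fin n)) := by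
    ext k
    simp only [SimpleGraph.sideLeaves, SimpleGraph.side, ← hA, Finset.mem_filter, harc]
  have := hT.isAcyclic.two_mul_label_add_one_le_card_sideLeaves label leaf hleaf hleaf0 hvert huv
  rw [hleaves, Fin.card_filter_le_and_lt hj] at this
  omega

/-- In a planar tree with `n` cyclically ordered leaves, internal
vertices of degree 3 or 4, edge labels satisfying the degree-3 and degree-4
vertex conditions, and all leaf edges labeled 0, an internal edge whose cut
separates the arc of `d = j - i` consecutive leaves `i, …, j-1` from the rest
carries a label at most `⌊(d-1)/2⌋`. -/
theorem stmt4 {V : Type*} [Fintype V] [DecidableEq V]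
    (G : SimpleGraph V) [DecidableRel G.Adj] (hT : G.IsTree)
    (label : Sym2 V → ℕ)
    (n : ℕ) (hn : 3 ≤ n)
    (leaf : Fin n → V) (hinj : Function.Injective leaf)
    (hleaf : ∀ v, G.degree v = 1 ↔ ∃ k, leaf k = v)
    (hdeg : ∀ v, G.degree v = 1 ∨ G.degree v = 3 ∨ G.degree v = 4)
    (h3 : ∀ v, G.degree v = 3 → ∀ e ∈ G.incidenceFinset v,
      label e ≤ ∑ e' ∈ (G.incidenceFinset v).erase e, label e')
    (h4 : ∀ v, G.degree v = 4 → ∀ e ∈ G.incidenceFinset v,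
      label e ≤ (∑ e' ∈ (G.incidenceFinset v).erase e, label e') + 1)
    (hleaf0 : ∀ e ∈ G.edgeFinset, (∃ k, leaf k ∈ e) → label e = 0)
    (u v : V) (huv : G.Adj u v)
    (hu : G.degree u ≠ 1) (hv : G.degree v ≠ 1)
    (A : Set V) (hA : A = {w | (G.deleteEdges {s(u, v)}).Reachable u w})
    (i j : ℕ) (hij : i < j) (hj : j ≤ n)
    (hd2 : 2 ≤ j - i) (hdn : j - i ≤ n - 2)
    (harc : ∀ k : Fin n, leaf k ∈ A ↔ i ≤ (k : ℕ) ∧ (k : ℕ) < j) :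
    label s(u, v) ≤ (j - i - 1) / 2 :=
  stmt4_general G hT label n leaf hleaf hdeg h3 h4 hleaf0 u v huv A hA i j hj harc
end
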